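/- Let (A, ∂) be a chain complex with A a graded commutative algebra (∂ not assumed a derivation), and let i : (C, ∂_C) → (A, ∂) be a subcomplex with retraction I : A → C satisfying I∘i = id_C. Let d be the canonical coderivation extension of ∂ to SA, d̃ = τ̃^{-1} d τ̃, and suppose ∂_∞ is a coderivation on SC with a dg-coalgebra map ι : (SC, ∂_∞) → (SA, d̃) extending i (i.e. agreeing with i on the linear part). Then τ̃_C := Ĩ ∘ τ̃ ∘ ι is an isomorphism of differential graded coalgebras from (SC, ∂_∞) to (SC, d_C), where d_C is the canonical coderivation extension of ∂_C and Ĩ is the canonical coalgebra extension of I. -/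

import Mathlib

/-!
A coalgebra map out of a cocommutative conilpotent coalgebra that is injective on primitives is
injective: if `Δ^{n+1} x = 0` then `Δ x ∈ N ⊗ N` for `N = ker Δ^n`, and over a field `F ⊗ F` stays
injective on `N ⊗ N`. In the cofree coalgebra `SC` the primitives are exactly `C` and a coalgebra
endomorphism is determined by its projection; so an endomorphism restricting to the identity on `C`
is bijective (a linear left inverse lifts to a coalgebra left inverse, itself injective).
On `C`, `τ̃_C = Ĩ τ̃ ι` restricts to `I ∘ τ ∘ i = I ∘ i = id`. Conjugating `∂_∞` by this automorphism
gives a coderivation with projection `∂_C ∘ π`, because `ι`, `τ̃`, `Ĩ` intertwine the differentials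
and `I` is a chain map; by uniqueness of coderivation extensions it is `d_C`.
-/

open TensorProduct PiTensorProduct

variable (K : Type) [Field K]

/-- Coassociativity of a (not necessarily counital) comultiplication. -/
def Coassoc {C : Type} [AddCommGroup C] [Module K C] (Δ : C →ₗ[K] C ⊗[K] C) : Prop :=
  (TensorProduct.assoc K C C C).toLinearMap ∘ₗ Δ.rTensor C ∘ₗ Δ = Δ.lTensor C ∘ₗ Δ

/-- (Graded) cocommutativity, signs suppressed. -/
def Cocomm {C : Type} [AddCommGroup C] [Module K C] (Δ : C →ₗ[K] C ⊗[K] C) : Prop :=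
  (TensorProduct.comm K C C).toLinearMap ∘ₗ Δ = Δ

/-- Prepending one tensor factor: `M ⊗ M^{⊗n} → M^{⊗(n+1)}`. -/
noncomputable def consT (M : Type) [AddCommGroup M] [Module K M] (n : ℕ) :
    M ⊗[K] (⨂[K]^n M) →ₗ[K] ⨂[K]^(n+1) M :=
  (PiTensorProduct.reindex K (fun _ => M) (finCongr (by omega) : Fin (1+n) ≃ Fin (n+1))).toLinearMap
    ∘ₗ (PiTensorProduct.reindex K (fun _ => M) finSumFinEquiv).toLinearMap
    ∘ₗ (PiTensorProduct.tmulEquiv (ι := Fin 1) (ι₂ := Fin n) K M).toLinearMap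
    ∘ₗ (LinearMap.rTensor (⨂[K]^n M) (PiTensorProduct.subsingletonEquiv (s := fun _ => M) (0 : Fin 1)).symm.toLinearMap)

/-- The iterated (reduced) comultiplication `Δ^n : C → C^{⊗(n+1)}`. -/
noncomputable def iterComul {C : Type} [AddCommGroup C] [Module K C]
    (Δ : C →ₗ[K] C ⊗[K] C) : (n : ℕ) → C →ₗ[K] ⨂[K]^(n+1) C
  | 0 => (PiTensorProduct.subsingletonEquiv (s := fun _ => C) (0 : Fin 1)).symm.toLinearMap
  | n+1 => consT K C (n+1) ∘ₗ (LinearMap.lTensor C (iterComul Δ n)) ∘ₗ Δ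

/-- Conilpotency: every element is killed by some iterated comultiplication. -/
def Conilpotent {C : Type} [AddCommGroup C] [Module K C] (Δ : C →ₗ[K] C ⊗[K] C) : Prop :=
  ∀ x : C, ∃ n, iterComul K Δ n x = 0

/-- `F` is a morphism of (non-counital) coalgebras. -/
def IsCoalgMap {C D : Type} [AddCommGroup C] [Module K C] [AddCommGroup D] [Module K D]
    (ΔC : C →ₗ[K] C ⊗[K] C) (ΔD : D →ₗ[K] D ⊗[K] D) (F : C →ₗ[K] D) : Prop :=
  ΔD ∘ₗ F = TensorProduct.map F F ∘ₗ ΔC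

/-- `D` is a coderivation of the coalgebra `(S, Δ)` (signs suppressed). -/
def IsCoderiv {S : Type} [AddCommGroup S] [Module K S]
    (Δ : S →ₗ[K] S ⊗[K] S) (D : S →ₗ[K] S) : Prop :=
  Δ ∘ₗ D = (D.rTensor S + D.lTensor S) ∘ₗ Δ

/-- A model of the cofree cocommutative conilpotent coalgebra `SA = ⊕_{n≥1} Λⁿ A`
on a vector space `A`, packaged with its weight grading (`piece n = ΛⁿA`), the
inclusion `incl : A → Λ¹A ⊆ SA`, the projection `proj : SA → A` onto the linear
summand, the (wedge) product, and the cofreeness universal property. -/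
structure SymCoalg (K : Type) [Field K] (A : Type) [AddCommGroup A] [Module K A] where
  S : Type
  [acg : AddCommGroup S]
  [mod : Module K S]
  Δ : S →ₗ[K] S ⊗[K] S
  coassoc : Coassoc K Δ
  cocomm : Cocomm K Δ
  conil : Conilpotent K Δ
  proj : S →ₗ[K] A
  incl : A →ₗ[K] S
  proj_incl : proj ∘ₗ incl = LinearMap.id
  /-- the weight grading: `piece n` models `ΛⁿA` -/
  piece : ℕ → Submodule K S
  piece_zero : piece 0 = ⊥
  piece_supr : (⨆ n, piece n) = ⊤
  piece_indep : iSupIndep piece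
  incl_piece : LinearMap.range incl = piece 1
  proj_piece : ∀ n, n ≠ 1 → ∀ x ∈ piece n, proj x = 0
  Δ_ker_one : ∀ x ∈ piece 1, Δ x = 0
  /-- the wedge product on `SA` (signs suppressed) -/
  wedge : S →ₗ[K] S →ₗ[K] S
  wedge_comm : ∀ x y, wedge x y = wedge y x
  wedge_assoc : ∀ x y z, wedge (wedge x y) z = wedge x (wedge y z)
  wedge_piece : ∀ m n, ∀ x ∈ piece m, ∀ y ∈ piece n, wedge x y ∈ piece (m + n)
  /-- `SA` is generated under the wedge product by `A = Λ¹A` -/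
  gen : ∀ p : Submodule K S, LinearMap.range incl ≤ p →
      (∀ x y, x ∈ p → y ∈ p → wedge x y ∈ p) → p = ⊤
  /-- cofreeness: unique coalgebra lift of linear maps out of conilpotent
  cocommutative coalgebras -/
  cofree : ∀ {C : Type} [AddCommGroup C] [Module K C] (ΔC : C →ₗ[K] C ⊗[K] C),
      Coassoc K ΔC → Cocomm K ΔC → Conilpotent K ΔC → ∀ f : C →ₗ[K] A,
      ∃! F : C →ₗ[K] S, IsCoalgMap K ΔC Δ F ∧ proj ∘ₗ F = f
  /-- unique coderivation extension property of the cofree coalgebra -/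
  coderExt : ∀ g : S →ₗ[K] A, ∃! D : S →ₗ[K] S, IsCoderiv K Δ D ∧ proj ∘ₗ D = g

attribute [instance] SymCoalg.acg SymCoalg.mod

/-- The tautologous map `τ : SA → A`, `x₁∧⋯∧xₙ ↦ x₁⋯xₙ`: it is characterized as
the multiplicative extension of the identity of `A`. -/
def IsTau {K : Type} [Field K] {A : Type} [CommRing A] [Algebra K A]
    (P : SymCoalg K A) (τ : P.S →ₗ[K] A) : Prop :=
  τ ∘ₗ P.incl = LinearMap.id ∧ ∀ x y : P.S, τ (P.wedge x y) = τ x * τ y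

/-- The cumulant bijection `τ̃ : SA → SA`: the canonical coalgebra lift of `τ`,
i.e. the unique coalgebra endomorphism with `proj ∘ τ̃ = τ`. -/
def IsCumul {K : Type} [Field K] {A : Type} [CommRing A] [Algebra K A]
    (P : SymCoalg K A) (τ : P.S →ₗ[K] A) (τt : P.S →ₗ[K] P.S) : Prop :=
  IsTau P τ ∧ IsCoalgMap K P.Δ P.Δ τt ∧ P.proj ∘ₗ τt = τ

section Coalgebra

variable {K}
variable {C D E : Type} [AddCommGroup C] [Module K C] [AddCommGroup D] [Module K D]
  [AddCommGroup E] [Module K E]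
  {ΔC : C →ₗ[K] C ⊗[K] C} {ΔD : D →ₗ[K] D ⊗[K] D} {ΔE : E →ₗ[K] E ⊗[K] E}

theorem IsCoalgMap.id (Δ : C →ₗ[K] C ⊗[K] C) : IsCoalgMap K Δ Δ LinearMap.id := by
  rw [IsCoalgMap, LinearMap.comp_id, TensorProduct.map_id, LinearMap.id_comp]

theorem IsCoalgMap.comp {F : C →ₗ[K] D} {G : D →ₗ[K] E} (hF : IsCoalgMap K ΔC ΔD F)
    (hG : IsCoalgMap K ΔD ΔE G) : IsCoalgMap K ΔC ΔE (G ∘ₗ F) := by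
  rw [IsCoalgMap, ← LinearMap.comp_assoc, hG, LinearMap.comp_assoc, hF, ← LinearMap.comp_assoc,
    TensorProduct.map_comp]

theorem IsCoalgMap.comul_apply_eq_zero {F : C →ₗ[K] D} (hF : IsCoalgMap K ΔC ΔD F) {x : C}
    (hx : ΔC x = 0) : ΔD (F x) = 0 := by
  rw [← LinearMap.comp_apply, hF, LinearMap.comp_apply, hx, map_zero]

theorem IsCoderiv.conj {e : C ≃ₗ[K] D} (he : IsCoalgMap K ΔC ΔD e.toLinearMap)
    {δ : C →ₗ[K] C} (hδ : IsCoderiv K ΔC δ) :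
    IsCoderiv K ΔD (e.toLinearMap ∘ₗ δ ∘ₗ e.symm.toLinearMap) := by
  set δ' := e.toLinearMap ∘ₗ δ ∘ₗ e.symm.toLinearMap
  have hcomm : TensorProduct.map e.toLinearMap e.toLinearMap ∘ₗ (δ.rTensor C + δ.lTensor C) =
      (δ'.rTensor D + δ'.lTensor D) ∘ₗ TensorProduct.map e.toLinearMap e.toLinearMap := by
    apply TensorProduct.ext'
    intro x y
    simp [δ']
  have he' : ∀ y, ΔD (e y) = TensorProduct.map e.toLinearMap e.toLinearMap (ΔC y) :=
    LinearMap.congr_fun he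
  ext x
  change ΔD (e (δ (e.symm x))) = (δ'.rTensor D + δ'.lTensor D) (ΔD x)
  rw [he', ← LinearMap.comp_apply ΔC, hδ, LinearMap.comp_apply,
    ← LinearMap.comp_apply (TensorProduct.map _ _), hcomm, LinearMap.comp_apply, ← he',
    LinearEquiv.apply_symm_apply]

end Coalgebra

section Conilpotent

variable {K}
variable {C D : Type} [AddCommGroup C] [Module K C] [AddCommGroup D] [Module K D]

theorem consT_injective (M : Type) [AddCommGroup M] [Module K M] (n : ℕ) :
    Function.Injective (consT K M n) := by
  unfold consT
  simp only [LinearMap.coe_comp, LinearEquiv.coe_coe]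
  exact (LinearEquiv.injective _).comp ((LinearEquiv.injective _).comp
    ((LinearEquiv.injective _).comp
      (Module.Flat.rTensor_preserves_injective_linearMap _ (LinearEquiv.injective _))))

theorem mem_range_map_subtype_ker {M P : Type} [AddCommGroup M] [Module K M] [AddCommGroup P]
    [Module K P] (f : M →ₗ[K] P) {u : M ⊗[K] M} (hl : f.lTensor M u = 0)
    (hr : f.rTensor M u = 0) :
    u ∈ LinearMap.range (TensorProduct.map (LinearMap.ker f).subtype (LinearMap.ker f).subtype) := by
  set N := LinearMap.ker f
  have hexact := LinearMap.exact_subtype_ker_map f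
  obtain ⟨t, rfl⟩ := (Module.Flat.rTensor_exact M hexact u).mp hr
  have ht : f.lTensor N t = 0 := by
    apply Module.Flat.rTensor_preserves_injective_linearMap N.subtype N.injective_subtype
    rw [map_zero, ← LinearMap.comp_apply, LinearMap.rTensor_comp_lTensor,
      ← LinearMap.lTensor_comp_rTensor, LinearMap.comp_apply, hl]
  obtain ⟨t', rfl⟩ := (Module.Flat.lTensor_exact N hexact t).mp ht
  exact ⟨t', by rw [← LinearMap.comp_apply, LinearMap.rTensor_comp_lTensor]⟩

theorem comul_mem_range_map_subtype_ker_iterComul {Δ : C →ₗ[K] C ⊗[K] C} (hcc : Cocomm K Δ)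
    {n : ℕ} {x : C} (hx : iterComul K Δ (n + 1) x = 0) :
    Δ x ∈ LinearMap.range (TensorProduct.map (LinearMap.ker (iterComul K Δ n)).subtype
      (LinearMap.ker (iterComul K Δ n)).subtype) := by
  set φ := iterComul K Δ n
  have hl : φ.lTensor C (Δ x) = 0 := consT_injective C (n + 1) (by rw [map_zero]; exact hx)
  refine mem_range_map_subtype_ker φ hl ?_
  rw [← LinearMap.congr_fun hcc x, LinearMap.comp_apply, LinearEquiv.coe_coe,
    LinearMap.rTensor_comm, hl, map_zero]

theorem IsCoalgMap.injective {Δ : C →ₗ[K] C ⊗[K] C} {ΔD : D →ₗ[K] D ⊗[K] D}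
    (hcc : Cocomm K Δ) (hconil : Conilpotent K Δ) {F : C →ₗ[K] D} (hF : IsCoalgMap K Δ ΔD F)
    (hprim : ∀ x, Δ x = 0 → F x = 0 → x = 0) : Function.Injective F := by
  suffices h : ∀ n x, iterComul K Δ n x = 0 → F x = 0 → x = 0 by
    refine (injective_iff_map_eq_zero F).mpr fun x hx => ?_
    obtain ⟨n, hn⟩ := hconil x
    exact h n x hn hx
  intro n
  induction n with
  | zero => exact fun x hx _ => (LinearEquiv.map_eq_zero_iff _).mp hx
  | succ n ih =>
    intro x hx hFx
    refine hprim x ?_ hFx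
    set N := LinearMap.ker (iterComul K Δ n)
    obtain ⟨t, ht⟩ := comul_mem_range_map_subtype_ker_iterComul hcc hx
    have hinj : Function.Injective (F ∘ₗ N.subtype) :=
      (injective_iff_map_eq_zero _).mpr fun y hy => Subtype.ext (ih y y.2 hy)
    have hFt : TensorProduct.map (F ∘ₗ N.subtype) (F ∘ₗ N.subtype) t = 0 := by
      rw [TensorProduct.map_comp, LinearMap.comp_apply, ht, ← LinearMap.comp_apply, ← hF,
        LinearMap.comp_apply, hFx, map_zero]
    rw [← ht, TensorProduct.map_injective_of_flat_flat _ _ hinj hinj (hFt.trans (map_zero _).symm),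
      map_zero]

end Conilpotent

namespace SymCoalg

variable {K}
variable {A B : Type} [AddCommGroup A] [Module K A] [AddCommGroup B] [Module K B]

theorem comul_incl (P : SymCoalg K A) (a : A) : P.Δ (P.incl a) = 0 :=
  P.Δ_ker_one _ (P.incl_piece ▸ LinearMap.mem_range_self _ a)

theorem hom_ext (P : SymCoalg K A) {C : Type} [AddCommGroup C] [Module K C]
    {ΔC : C →ₗ[K] C ⊗[K] C} (hca : Coassoc K ΔC) (hcc : Cocomm K ΔC) (hconil : Conilpotent K ΔC)
    {F G : C →ₗ[K] P.S} (hF : IsCoalgMap K ΔC P.Δ F) (hG : IsCoalgMap K ΔC P.Δ G)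
    (h : P.proj ∘ₗ F = P.proj ∘ₗ G) : F = G :=
  (P.cofree ΔC hca hcc hconil (P.proj ∘ₗ G)).unique ⟨hF, h⟩ ⟨hG, rfl⟩

/-- The primitives, with zero comultiplication, form a conilpotent coalgebra; its inclusion and
`incl ∘ proj` are two coalgebra maps into `P.S` with the same projection. -/
theorem incl_proj_of_comul_eq_zero (P : SymCoalg K A) {x : P.S} (hx : P.Δ x = 0) :
    P.incl (P.proj x) = x := by
  set N := LinearMap.ker P.Δ
  have hconil : Conilpotent K (0 : N →ₗ[K] N ⊗[K] N) :=
    fun _ => ⟨1, by simp [iterComul]⟩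
  have hsub : IsCoalgMap K 0 P.Δ N.subtype := by
    ext y
    exact y.2
  have hinclProj : IsCoalgMap K 0 P.Δ (P.incl ∘ₗ P.proj ∘ₗ N.subtype) := by
    ext y
    exact P.comul_incl _
  have heq := P.hom_ext (by simp [Coassoc]) (by simp [Cocomm]) hconil hinclProj hsub
    (by rw [← LinearMap.comp_assoc, P.proj_incl, LinearMap.id_comp])
  exact LinearMap.congr_fun heq ⟨x, hx⟩

theorem isCoalgMap_comp_incl {P : SymCoalg K A} {Q : SymCoalg K B} {F : P.S →ₗ[K] Q.S}
    (hF : IsCoalgMap K P.Δ Q.Δ F) {f : A →ₗ[K] B} (hf : Q.proj ∘ₗ F ∘ₗ P.incl = f) :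
    F ∘ₗ P.incl = Q.incl ∘ₗ f := by
  ext a
  rw [← hf]
  exact (Q.incl_proj_of_comul_eq_zero (hF.comul_apply_eq_zero (P.comul_incl a))).symm

theorem eq_id_of_isCoalgMap (Q : SymCoalg K B) {F : Q.S →ₗ[K] Q.S} (hF : IsCoalgMap K Q.Δ Q.Δ F)
    (h : Q.proj ∘ₗ F = Q.proj) : F = LinearMap.id :=
  Q.hom_ext Q.coassoc Q.cocomm Q.conil hF (IsCoalgMap.id _) (by rw [h, LinearMap.comp_id])

theorem injective_of_isCoalgMap (Q : SymCoalg K B) {F : Q.S →ₗ[K] Q.S}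
    (hF : IsCoalgMap K Q.Δ Q.Δ F) (h : F ∘ₗ Q.incl = Q.incl) : Function.Injective F :=
  hF.injective Q.cocomm Q.conil fun x hx hFx => by
    rw [← Q.incl_proj_of_comul_eq_zero hx, ← LinearMap.comp_apply F, h] at hFx
    rwa [← Q.incl_proj_of_comul_eq_zero hx]

theorem bijective_of_isCoalgMap (Q : SymCoalg K B) {F : Q.S →ₗ[K] Q.S}
    (hF : IsCoalgMap K Q.Δ Q.Δ F) (h : F ∘ₗ Q.incl = Q.incl) : Function.Bijective F := by
  have hinj := Q.injective_of_isCoalgMap hF h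
  obtain ⟨F', hF'⟩ := F.exists_leftInverse_of_injective (LinearMap.ker_eq_bot.mpr hinj)
  obtain ⟨H, ⟨hH, hHproj⟩, -⟩ := Q.cofree Q.Δ Q.coassoc Q.cocomm Q.conil (Q.proj ∘ₗ F')
  have hHF : H ∘ₗ F = LinearMap.id := Q.eq_id_of_isCoalgMap (hF.comp hH) (by
    rw [← LinearMap.comp_assoc, hHproj, LinearMap.comp_assoc, hF', LinearMap.comp_id])
  have hHinj : Function.Injective H := Q.injective_of_isCoalgMap hH (by
    conv_lhs => rw [← h, ← LinearMap.comp_assoc, hHF, LinearMap.id_comp])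
  exact ⟨hinj, fun y => ⟨H y, hHinj (LinearMap.congr_fun hHF (H y))⟩⟩

theorem coderiv_ext (Q : SymCoalg K B) {δ δ' : Q.S →ₗ[K] Q.S} (hδ : IsCoderiv K Q.Δ δ)
    (hδ' : IsCoderiv K Q.Δ δ') (h : Q.proj ∘ₗ δ = Q.proj ∘ₗ δ') : δ = δ' :=
  (Q.coderExt (Q.proj ∘ₗ δ')).unique ⟨hδ, h⟩ ⟨hδ', rfl⟩

theorem comp_eq_comp_of_isCoderiv (Q : SymCoalg K B) {C : Type} [AddCommGroup C] [Module K C]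
    {ΔC : C →ₗ[K] C ⊗[K] C} {e : C ≃ₗ[K] Q.S} (he : IsCoalgMap K ΔC Q.Δ e.toLinearMap)
    {δ : C →ₗ[K] C} {δ' : Q.S →ₗ[K] Q.S} (hδ : IsCoderiv K ΔC δ) (hδ' : IsCoderiv K Q.Δ δ')
    (h : Q.proj ∘ₗ e.toLinearMap ∘ₗ δ = Q.proj ∘ₗ δ' ∘ₗ e.toLinearMap) :
    e.toLinearMap ∘ₗ δ = δ' ∘ₗ e.toLinearMap := by
  have hconj : e.toLinearMap ∘ₗ δ ∘ₗ e.symm.toLinearMap = δ' :=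
    Q.coderiv_ext (hδ.conj he) hδ' (by
      rw [← LinearMap.comp_assoc, ← LinearMap.comp_assoc, LinearMap.comp_assoc _ _ Q.proj, h]
      ext x
      simp)
  rw [← hconj]
  ext x
  simp

end SymCoalg

namespace IsCumul

variable {K}

theorem comp_incl {A : Type} [CommRing A] [Algebra K A] {P : SymCoalg K A}
    {τ : P.S →ₗ[K] A} {τt : P.S →ₗ[K] P.S} (h : IsCumul P τ τt) : τt ∘ₗ P.incl = P.incl := by
  rw [SymCoalg.isCoalgMap_comp_incl h.2.1 (f := LinearMap.id) (by
    rw [← LinearMap.comp_assoc, h.2.2, h.1.1]), LinearMap.comp_id]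

end IsCumul

theorem induced_cumulant_bijection {A : Type} [CommRing A] [Algebra K A]
    {C : Type} [AddCommGroup C] [Module K C]
    (bd : A →ₗ[K] A)
    (bdC : C →ₗ[K] C)
    (i : C →ₗ[K] A) (I : A →ₗ[K] C) (hIi : I ∘ₗ i = LinearMap.id)
    (hIchain : I ∘ₗ bd = bdC ∘ₗ I)
    (P : SymCoalg K A) (Q : SymCoalg K C)
    (tau : P.S →ₗ[K] A) (taut : P.S →ₗ[K] P.S) (htau : IsCumul P tau taut)
    (d : P.S →ₗ[K] P.S) (hd : IsCoderiv K P.Δ d ∧ P.proj ∘ₗ d = bd ∘ₗ P.proj)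
    (dt : P.S →ₗ[K] P.S) (hdt : taut ∘ₗ dt = d ∘ₗ taut)
    (dC : Q.S →ₗ[K] Q.S) (hdC : IsCoderiv K Q.Δ dC ∧ Q.proj ∘ₗ dC = bdC ∘ₗ Q.proj)
    (dinf : Q.S →ₗ[K] Q.S) (hdinf : IsCoderiv K Q.Δ dinf)
    (ιt : Q.S →ₗ[K] P.S) (hιt : IsCoalgMap K Q.Δ P.Δ ιt)
    (hιlin : P.proj ∘ₗ ιt ∘ₗ Q.incl = i)
    (hιdg : ιt ∘ₗ dinf = dt ∘ₗ ιt)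
    (It : P.S →ₗ[K] Q.S)
    (hIt : IsCoalgMap K P.Δ Q.Δ It ∧ Q.proj ∘ₗ It = I ∘ₗ P.proj) :
    IsCoalgMap K Q.Δ Q.Δ (It ∘ₗ taut ∘ₗ ιt) ∧
      (It ∘ₗ taut ∘ₗ ιt) ∘ₗ dinf = dC ∘ₗ (It ∘ₗ taut ∘ₗ ιt) ∧
      Function.Bijective (It ∘ₗ taut ∘ₗ ιt) := by
  have hG : IsCoalgMap K Q.Δ Q.Δ (It ∘ₗ taut ∘ₗ ιt) := (hιt.comp htau.2.1).comp hIt.1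
  have hItIncl : Q.proj ∘ₗ It ∘ₗ P.incl = I := by
    rw [← LinearMap.comp_assoc, hIt.2, LinearMap.comp_assoc, P.proj_incl, LinearMap.comp_id]
  have hGincl : (It ∘ₗ taut ∘ₗ ιt) ∘ₗ Q.incl = Q.incl :=
    calc (It ∘ₗ taut ∘ₗ ιt) ∘ₗ Q.incl = It ∘ₗ taut ∘ₗ P.incl ∘ₗ i := by
          rw [LinearMap.comp_assoc, LinearMap.comp_assoc, SymCoalg.isCoalgMap_comp_incl hιt hιlin]
      _ = It ∘ₗ P.incl ∘ₗ i := by rw [← LinearMap.comp_assoc i, htau.comp_incl]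
      _ = Q.incl ∘ₗ I ∘ₗ i := by
          rw [← LinearMap.comp_assoc i, SymCoalg.isCoalgMap_comp_incl hIt.1 hItIncl,
            LinearMap.comp_assoc]
      _ = Q.incl := by rw [hIi, LinearMap.comp_id]
  have hbij := Q.bijective_of_isCoalgMap hG hGincl
  have hproj : Q.proj ∘ₗ (It ∘ₗ taut ∘ₗ ιt) ∘ₗ dinf = Q.proj ∘ₗ dC ∘ₗ (It ∘ₗ taut ∘ₗ ιt) := by
    simp only [LinearMap.ext_iff, LinearMap.comp_apply] at hιdg hdt hd hIt hIchain hdC ⊢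
    intro x
    rw [hιdg, hdt, hIt.2, hd.2, hIchain, ← hIt.2, hdC.2]
  exact ⟨hG, Q.comp_eq_comp_of_isCoderiv (e := LinearEquiv.ofBijective _ hbij) hG hdinf hdC.1 hproj,
    hbij⟩
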